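/- Let Θ be a parameter set, θ̂^S ∈ Θ a fixed source parameter, and R : Θ × Δ_{K−1}^m → ℝ any risk function. Suppose θ̂^T ∈ Θ minimizes the contrastive pessimistic objective, i.e. sup_{q ∈ Δ_{K−1}^m} [ R(θ̂^T, q) − R(θ̂^S, q) ] = inf_{θ ∈ Θ} sup_{q ∈ Δ_{K−1}^m} [ R(θ, q) − R(θ̂^S, q) ]. Then for every labeling u ∈ Δ_{K−1}^m (in particular for the true target labeling), the target risk of θ̂^T is at most that of the source parameter: R(θ̂^T, u) ≤ R(θ̂^S, u). -/
import Mathlib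

open Finset

/-- If `θT` minimizes the contrastive pessimistic objective
`θ ↦ sup_{q ∈ Δ_{K-1}^m} [R(θ,q) - R(θS,q)]` (suprema/infima taken in the complete
lattice `EReal` so that they are well-defined), then for every labeling
`u ∈ Δ_{K-1}^m` — in particular the true target labeling — the risk of `θT` is at most
that of the source parameter: `R(θT,u) ≤ R(θS,u)`. -/
theorem stmt_5 {Θ : Type*} {m K : ℕ} (θS θT : Θ)
    (R : Θ → (Fin m → Fin K → ℝ) → ℝ)
    (hmin : (⨆ q : {q : Fin m → Fin K → ℝ // ∀ j, q j ∈ stdSimplex ℝ (Fin K)},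
          ((R θT q.1 : EReal) - (R θS q.1 : EReal))) =
        ⨅ θ : Θ, ⨆ q : {q : Fin m → Fin K → ℝ // ∀ j, q j ∈ stdSimplex ℝ (Fin K)},
          ((R θ q.1 : EReal) - (R θS q.1 : EReal))) :
    ∀ u : Fin m → Fin K → ℝ, (∀ j, u j ∈ stdSimplex ℝ (Fin K)) →
      R θT u ≤ R θS u := by
  intro u hu
  have hS : (⨆ q : {q : Fin m → Fin K → ℝ // ∀ j, q j ∈ stdSimplex ℝ (Fin K)},
      ((R θS q.1 : EReal) - (R θS q.1 : EReal))) ≤ 0 := by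
    apply iSup_le
    intro q
    rw [← EReal.coe_sub, sub_self]
    exact le_refl _
  have h1 : ((R θT u : EReal) - (R θS u : EReal)) ≤ 0 := by
    calc ((R θT u : EReal) - (R θS u : EReal))
        ≤ ⨆ q : {q : Fin m → Fin K → ℝ // ∀ j, q j ∈ stdSimplex ℝ (Fin K)},
            ((R θT q.1 : EReal) - (R θS q.1 : EReal)) := le_iSup (fun q : {q : Fin m → Fin K → ℝ // ∀ j, q j ∈ stdSimplex ℝ (Fin K)} => ((R θT q.1 : EReal) - (R θS q.1 : EReal))) ⟨u, hu⟩
      _ ≤ _ := hmin ▸ iInf_le _ θS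
      _ ≤ 0 := hS
  rw [← EReal.coe_sub] at h1
  have h2 : R θT u - R θS u ≤ (0:ℝ) := by exact_mod_cast h1
  linarith
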